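/- arXiv:1601.02896 — 5 statements merged into one kernel-verified Lean document; each statement's English description precedes it below -/
import Mathlib

section
/- In the reduced k-th power G^(k), the degree of the vertex a_1^{n_1} a_2^{n_2} ⋯ a_v^{n_v} equals the sum of deg_G(a_i) over all indices i with n_i ≥ 1. -/
/-!
The neighbours of `m` are exactly the monomials `b · (m / a)` with `a ∣ m` and `ab ∈ E(G)`.
The pair `(a, b)` can be read off from `b · (m / a)`, since `a` is the only variable whose
multiplicity drops, so these neighbours are in bijection with the pairs `(a, b)` where `a`
lies in the support of `m` and `b` is a `G`-neighbour of `a`.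
-/

open Finset
open scoped Classical

variable {V W : Type*}

/-- The reduced `k`-th power of a graph `G`: vertices are size-`k` multisets
(degree-`k` monic monomials) of vertices of `G`; `a·f` is adjacent to `b·f`
whenever `ab ∈ E(G)` and `f` is a degree-`(k-1)` monomial. -/
def reducedPow (G : SimpleGraph V) (k : ℕ) : SimpleGraph (Sym V k) :=
  SimpleGraph.fromRel (fun m m' => ∃ a b : V, G.Adj a b ∧
    ∃ f : Multiset V, (m : Multiset V) = a ::ₘ f ∧ (m' : Multiset V) = b ::ₘ f)

namespace Multiset

variable {α : Type*} [DecidableEq α]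

theorem card_cons_erase {s : Multiset α} {a : α} (h : a ∈ s) (b : α) :
    card (b ::ₘ s.erase a) = card s := by
  rw [card_cons, card_erase_add_one h]

theorem eq_and_eq_of_cons_erase_eq {s : Multiset α} {a a' b b' : α} (ha : a ∈ s) (hb : b ≠ a)
    (h : b ::ₘ s.erase a = b' ::ₘ s.erase a') : a = a' ∧ b = b' := by
  have haa' : a = a' := by
    by_contra hne
    have hcount := congrArg (count a) h
    rw [count_cons_of_ne hb.symm, count_erase_self, count_cons, count_erase_of_ne hne] at hcount
    have : 0 < count a s := count_pos.2 ha
    omega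
  subst haa'
  exact ⟨rfl, (cons_inj_left _).1 h⟩

end Multiset

section ReducedPow

variable [DecidableEq V] {G : SimpleGraph V} {k : ℕ}

theorem reducedPow_adj_iff {m m' : Sym V k} :
    (reducedPow G k).Adj m m' ↔ ∃ a ∈ (m : Multiset V), ∃ b, G.Adj a b ∧
      (m' : Multiset V) = b ::ₘ (m : Multiset V).erase a := by
  constructor
  · rintro ⟨-, ⟨a, b, hab, f, hm, hm'⟩ | ⟨b, a, hba, f, hm', hm⟩⟩
    · exact ⟨a, by simp [hm], b, hab, by simp [hm, hm']⟩
    · exact ⟨a, by simp [hm], b, hba.symm, by simp [hm, hm']⟩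
  · rintro ⟨a, ha, b, hab, hm'⟩
    refine ⟨fun hmm' => G.ne_of_adj hab ?_,
      Or.inl ⟨a, b, hab, _, (Multiset.cons_erase ha).symm, hm'⟩⟩
    subst hmm'
    exact (Multiset.cons_inj_left _).1 ((Multiset.cons_erase ha).trans hm')

def reducedPowSwap (m : Sym V k) (p : Σ _ : V, V) : Multiset V :=
  p.2 ::ₘ (m : Multiset V).erase p.1

variable [Fintype V] [DecidableRel G.Adj]

theorem image_coe_neighborSet_reducedPow (m : Sym V k) :
    (↑) '' (reducedPow G k).neighborSet m =
      reducedPowSwap m '' ↑((m : Multiset V).toFinset.sigma fun a => G.neighborFinset a) := by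
  ext x
  simp only [Set.mem_image, SimpleGraph.mem_neighborSet, reducedPow_adj_iff, coe_sigma,
    Set.mem_sigma_iff, mem_coe, Multiset.mem_toFinset, SimpleGraph.mem_neighborFinset,
    Sigma.exists, reducedPowSwap]
  constructor
  · rintro ⟨m', ⟨a, ha, b, hab, hm'⟩, rfl⟩
    exact ⟨a, b, ⟨ha, hab⟩, hm'.symm⟩
  · rintro ⟨a, b, ⟨ha, hab⟩, rfl⟩
    exact ⟨⟨_, (Multiset.card_cons_erase ha b).trans m.2⟩, ⟨a, ha, b, hab, rfl⟩, rfl⟩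

theorem injOn_reducedPowSwap (m : Sym V k) :
    Set.InjOn (reducedPowSwap m)
      ↑((m : Multiset V).toFinset.sigma fun a => G.neighborFinset a) := by
  rintro ⟨a, b⟩ hp ⟨a', b'⟩ - h
  simp only [coe_sigma, Set.mem_sigma_iff, mem_coe, Multiset.mem_toFinset,
    SimpleGraph.mem_neighborFinset] at hp
  obtain ⟨rfl, rfl⟩ := Multiset.eq_and_eq_of_cons_erase_eq hp.1 (G.ne_of_adj hp.2).symm h
  rfl

end ReducedPow

/-- In the reduced `k`-th power `G^(k)`, the degree of the vertex
`a_1^{n_1} ⋯ a_v^{n_v}` is the sum of `deg_G(a_i)` over all `i` with `n_i ≥ 1`. -/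
theorem stmt_2 [Fintype V] [DecidableEq V] (G : SimpleGraph V) [DecidableRel G.Adj]
    (k : ℕ) (m : Sym V k) :
    ((reducedPow G k).neighborSet m).ncard =
      ∑ a ∈ (m : Multiset V).toFinset, G.degree a := by
  rw [← Set.ncard_image_of_injective _ Sym.coe_injective, image_coe_neighborSet_reducedPow,
    (injOn_reducedPowSwap m).ncard_image, Set.ncard_coe_finset, card_sigma]
  simp only [SimpleGraph.card_neighborFinset_eq_degree]
end

section
/- Let G be a connected graph. The natural projection η: G^k → G^(k), sending a k-tuple to its S_k-orbit, induces a surjective linear map η*: C(G^k) → C(G^(k)) on cycle spaces over F_2. -/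
open Finset
open scoped Classical

variable {V W : Type*}

/-- The `k`-fold Cartesian power of a graph. -/
def cartPow (G : SimpleGraph V) (k : ℕ) : SimpleGraph (Fin k → V) :=
  SimpleGraph.fromRel (fun x y => ∃ i, G.Adj (x i) (y i) ∧ ∀ j, j ≠ i → x j = y j)

/-- The quotient map `G^k → G^(k)` sending a tuple to its multiset of coordinates. -/
def symOfTuple (k : ℕ) (x : Fin k → V) : Sym V k :=
  ⟨(List.ofFn x : List V), by simp⟩

/-- The edge space of `G` over `𝔽₂`: functions on `Sym2 V` supported on edges. -/
def edgeSpace (G : SimpleGraph V) : Submodule (ZMod 2) (Sym2 V → ZMod 2) where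
  carrier := {x | ∀ e, e ∉ G.edgeSet → x e = 0}
  add_mem' := by intro a b ha hb e he; simp [ha e he, hb e he]
  zero_mem' := by intro e he; rfl
  smul_mem' := by intro c x hx e he; simp [hx e he]

/-- The boundary map `δ` from the edge space to the vertex space over `𝔽₂`. -/
noncomputable def boundaryMap (G : SimpleGraph V) [Fintype V] :
    (Sym2 V → ZMod 2) →ₗ[ZMod 2] (V → ZMod 2) where
  toFun x v := ∑ e ∈ G.edgeFinset, if v ∈ e then x e else 0
  map_add' x y := by
    funext v
    try dsimp only
    rw [Pi.add_apply, ← Finset.sum_add_distrib]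
    exact Finset.sum_congr rfl (fun e _ => by split <;> simp)
  map_smul' c x := by
    funext v
    try dsimp only
    rw [RingHom.id_apply, Pi.smul_apply, smul_eq_mul, Finset.mul_sum]
    exact Finset.sum_congr rfl (fun e _ => by split <;> simp)

/-- The cycle space of `G` over `𝔽₂`: elements of the edge space with zero boundary. -/
noncomputable def cycleSpace (G : SimpleGraph V) [Fintype V] :
    Submodule (ZMod 2) (Sym2 V → ZMod 2) :=
  edgeSpace G ⊓ LinearMap.ker (boundaryMap G)

/-- The linear map on edge spaces induced by a vertex map `φ` (a weak homomorphism):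
an edge maps to its image if the image is a genuine edge, and to `0` if it collapses. -/
noncomputable def inducedMap (φ : V → W) [Fintype V] :
    (Sym2 V → ZMod 2) →ₗ[ZMod 2] (Sym2 W → ZMod 2) where
  toFun x e' := if e'.IsDiag then 0 else ∑ e : Sym2 V, if Sym2.map φ e = e' then x e else 0
  map_add' x y := by
    funext e'
    try dsimp only
    by_cases h : e'.IsDiag
    · simp [h]
    · rw [Pi.add_apply, if_neg h, if_neg h, if_neg h, ← Finset.sum_add_distrib]
      exact Finset.sum_congr rfl (fun e _ => by split <;> simp)
  map_smul' c x := by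
    funext e'
    try dsimp only
    by_cases h : e'.IsDiag
    · simp [h]
    · rw [RingHom.id_apply, Pi.smul_apply, smul_eq_mul, if_neg h, if_neg h, Finset.mul_sum]
      exact Finset.sum_congr rfl (fun e _ => by split <;> simp)

/-
The projection `η` is a graph homomorphism `G^k → G^(k)`, and for a chain `x` the boundary of
`η* x` at a multiset `m` is the sum of the boundary of `x` over the fibre `η⁻¹ m`; hence `η*`
maps cycles to cycles. Conversely, every edge of `G^(k)` lifts to `G^k`, so a cycle `y` lifts to
a chain `x₀` whose boundary sums to zero on every fibre. Such a vertex function is a sum of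
pairs `u + v` with `η u = η v`, i.e. `v = u ∘ σ`, and writing `σ` as a product of transpositions
it suffices to realise `u + u ∘ (i j)` as the boundary of a chain killed by `η*`. Since `G` is
connected there is a path from `u i` to `u j`; moving coordinate `j` along it, and adding the
image of that walk under the transposition `(i j)`, gives such a chain. Correcting `x₀` by
these chains yields a cycle of `G^k` over `y`.
-/

open Function

section Chains

variable {α β : Type*}

lemma boundaryMap_apply [Fintype α] (G : SimpleGraph α) (x : Sym2 α → ZMod 2) (v : α) :
    boundaryMap G x v = ∑ e ∈ G.edgeFinset, if v ∈ e then x e else 0 := rfl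

lemma inducedMap_apply [Fintype α] (φ : α → β) (x : Sym2 α → ZMod 2) (e' : Sym2 β) :
    inducedMap φ x e' =
      if e'.IsDiag then 0 else ∑ e : Sym2 α, if e.map φ = e' then x e else 0 := rfl

lemma zmodTwo_add_self {M : Type*} [AddCommGroup M] [Module (ZMod 2) M] (x : M) : x + x = 0 := by
  rw [← two_smul (ZMod 2), show (2 : ZMod 2) = 0 from rfl, zero_smul]

lemma zmodTwo_add_add_add_cancel {M : Type*} [AddCommGroup M] [Module (ZMod 2) M] (x y z : M) :
    x + y + (y + z) = x + z := by
  rw [add_assoc, ← add_assoc y, zmodTwo_add_self, zero_add]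

noncomputable def pushVertex [Fintype α] (φ : α → β) : (α → ZMod 2) →ₗ[ZMod 2] (β → ZMod 2) where
  toFun z w := ∑ v with φ v = w, z v
  map_add' _ _ := by ext; simp [Finset.sum_add_distrib]
  map_smul' _ _ := by ext; simp [Finset.mul_sum]

lemma pushVertex_apply [Fintype α] (φ : α → β) (z : α → ZMod 2) (w : β) :
    pushVertex φ z w = ∑ v with φ v = w, z v := rfl

variable [DecidableEq α]

lemma single_mem_edgeSpace {G : SimpleGraph α} {e : Sym2 α} (he : e ∈ G.edgeSet) :
    Pi.single e 1 ∈ edgeSpace G :=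
  fun _ he' => Pi.single_eq_of_ne (by rintro rfl; exact he' he) _

lemma edgeSpace_eq_span [Fintype α] (G : SimpleGraph α) :
    edgeSpace G = Submodule.span (ZMod 2) ((fun e => Pi.single e 1) '' G.edgeSet) := by
  refine le_antisymm (fun x hx => ?_) (Submodule.span_le.mpr ?_)
  · rw [← Finset.univ_sum_single x]
    refine Submodule.sum_mem _ fun e _ => ?_
    by_cases he : e ∈ G.edgeSet
    · rw [← mul_one (x e), ← smul_eq_mul, Pi.single_smul']
      exact Submodule.smul_mem _ _ (Submodule.subset_span ⟨e, he, rfl⟩)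
    · rw [hx e he, Pi.single_zero]
      exact Submodule.zero_mem _
  · rintro _ ⟨e, he, rfl⟩
    exact single_mem_edgeSpace he

lemma boundaryMap_single [Fintype α] {G : SimpleGraph α} {a b : α} (h : G.Adj a b) :
    boundaryMap G (Pi.single s(a, b) 1) = Pi.single a 1 + Pi.single b 1 := by
  ext v
  rw [boundaryMap_apply, Finset.sum_eq_single_of_mem s(a, b) (G.mem_edgeFinset.mpr h)
    (fun e _ hne => by simp [Pi.single_eq_of_ne hne])]
  rcases eq_or_ne v a with rfl | hva
  · simp [h.ne]
  · simp [Pi.single_apply, hva]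

lemma inducedMap_single [Fintype α] [DecidableEq β] {φ : α → β} {e : Sym2 α}
    (h : ¬ (e.map φ).IsDiag) : inducedMap φ (Pi.single e 1) = Pi.single (e.map φ) 1 := by
  ext e'
  rw [inducedMap_apply]
  by_cases hd : e'.IsDiag
  · rw [if_pos hd, Pi.single_eq_of_ne (by rintro rfl; exact h hd)]
  · rw [if_neg hd, Finset.sum_eq_single e (fun e₀ _ hne => by simp [hne]) (by simp)]
    simp [Pi.single_apply, eq_comm]

lemma inducedMap_single_of_mem_edgeSet [Fintype α] [DecidableEq β] {G : SimpleGraph α}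
    {H : SimpleGraph β} (f : G →g H) {e : Sym2 α} (he : e ∈ G.edgeSet) :
    inducedMap f (Pi.single e 1) = Pi.single (e.map f) 1 :=
  inducedMap_single (H.not_isDiag_of_mem_edgeSet (f.map_mem_edgeSet he))

lemma pushVertex_single [Fintype α] [DecidableEq β] (φ : α → β) (a : α) :
    pushVertex φ (Pi.single a 1) = Pi.single (φ a) 1 := by
  ext w
  rw [pushVertex_apply]
  by_cases h : φ a = w
  · rw [Finset.sum_eq_single_of_mem a (by simp [h]) (fun v _ hne => Pi.single_eq_of_ne hne _)]
    simp [h]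
  · rw [Finset.sum_eq_zero (fun v hv => Pi.single_eq_of_ne (by rintro rfl; simp_all) _),
      Pi.single_eq_of_ne (Ne.symm h)]

lemma mem_of_pushVertex_eq_zero [Fintype α] [Fintype β] {φ : α → β}
    (p : Submodule (ZMod 2) (α → ZMod 2))
    (hp : ∀ u v, φ u = φ v → Pi.single u 1 + Pi.single v 1 ∈ p) {z : α → ZMod 2}
    (hz : pushVertex φ z = 0) : z ∈ p := by
  rcases isEmpty_or_nonempty α with _ | _
  · exact Subsingleton.elim z 0 ▸ p.zero_mem
  -- `r v` represents the fibre of `v`; the representative terms cancel fibre by fibre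
  set r : α → α := fun v => invFun φ (φ v)
  have hr : ∀ v, φ (r v) = φ v := fun v => invFun_eq ⟨v, rfl⟩
  have hrep : ∑ v, z v • Pi.single (r v) (1 : ZMod 2) = 0 := by
    calc ∑ v, z v • Pi.single (r v) (1 : ZMod 2)
        = ∑ w, ∑ v with φ v = w, z v • Pi.single (invFun φ w) (1 : ZMod 2) := by
          rw [← Finset.sum_fiberwise _ φ]
          refine Finset.sum_congr rfl fun w _ => Finset.sum_congr rfl fun v hv => ?_
          rw [← (Finset.mem_filter.mp hv).2]
      _ = ∑ w, pushVertex φ z w • Pi.single (invFun φ w) 1 := by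
          simp only [pushVertex_apply, Finset.sum_smul]
      _ = 0 := by simp [hz]
  have hz' : z = ∑ v, z v • (Pi.single v 1 + Pi.single (r v) 1) := by
    simp_rw [smul_add, Finset.sum_add_distrib, hrep, add_zero, ← Pi.single_smul', smul_eq_mul,
      mul_one]
    exact (Finset.univ_sum_single z).symm
  rw [hz']
  exact Submodule.sum_mem _ fun v _ => Submodule.smul_mem _ _ (hp v (r v) (hr v).symm)

noncomputable def walkChain {G : SimpleGraph α} : ∀ {a b : α}, G.Walk a b → Sym2 α → ZMod 2
  | _, _, .nil => 0
  | _, _, .cons (u := a) (v := c) _ p => Pi.single s(a, c) 1 + walkChain p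

lemma walkChain_mem_edgeSpace {G : SimpleGraph α} {a b : α} (p : G.Walk a b) :
    walkChain p ∈ edgeSpace G := by
  induction p with
  | nil => exact Submodule.zero_mem _
  | cons h _ ih => exact Submodule.add_mem _ (single_mem_edgeSpace h) ih

lemma boundaryMap_walkChain [Fintype α] {G : SimpleGraph α} {a b : α} (p : G.Walk a b) :
    boundaryMap G (walkChain p) = Pi.single a 1 + Pi.single b 1 := by
  induction p with
  | nil => exact (map_zero _).trans (zmodTwo_add_self _).symm
  | cons h p ih =>
    rw [walkChain, map_add, boundaryMap_single h, ih, zmodTwo_add_add_add_cancel]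

end Chains

noncomputable def collapsedBoundaries {α β : Type*} [Fintype α] (G : SimpleGraph α)
    (φ : α → β) : Submodule (ZMod 2) (α → ZMod 2) :=
  (edgeSpace G ⊓ LinearMap.ker (inducedMap φ)).map (boundaryMap G)

section Hom

variable {α β : Type*} [Fintype α] [DecidableEq α] [DecidableEq β]
  {G : SimpleGraph α} {H : SimpleGraph β} (f : G →g H)

lemma inducedMap_walkChain_map_of_comp_eq (F : G →g G) (hF : ∀ x, f (F x) = f x) {a b : α}
    (p : G.Walk a b) : inducedMap f (walkChain (p.map F)) = inducedMap f (walkChain p) := by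
  induction p with
  | nil => rfl
  | cons h p ih =>
    rw [SimpleGraph.Walk.map_cons, walkChain, walkChain, map_add, map_add, ih,
      inducedMap_single_of_mem_edgeSet f (F.map_adj h), inducedMap_single_of_mem_edgeSet f h,
      Sym2.map_mk, Sym2.map_mk, hF, hF]

lemma inducedMap_mem_edgeSpace {x : Sym2 α → ZMod 2} (hx : x ∈ edgeSpace G) :
    inducedMap f x ∈ edgeSpace H := by
  rw [edgeSpace_eq_span] at hx
  refine (Submodule.span_le (p := (edgeSpace H).comap (inducedMap f))).mpr ?_ hx
  rintro _ ⟨e, he, rfl⟩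
  rw [SetLike.mem_coe, Submodule.mem_comap, inducedMap_single_of_mem_edgeSet f he]
  exact single_mem_edgeSpace (f.map_mem_edgeSet he)

lemma boundaryMap_inducedMap [Fintype β] {x : Sym2 α → ZMod 2} (hx : x ∈ edgeSpace G) :
    boundaryMap H (inducedMap f x) = pushVertex f (boundaryMap G x) := by
  rw [edgeSpace_eq_span] at hx
  refine LinearMap.eqOn_span (f := boundaryMap H ∘ₗ inducedMap f)
    (g := pushVertex f ∘ₗ boundaryMap G) ?_ hx
  rintro _ ⟨e, he, rfl⟩
  induction e using Sym2.ind with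
  | _ a b =>
    have hab : G.Adj a b := he
    simp only [LinearMap.comp_apply, inducedMap_single_of_mem_edgeSet f he, Sym2.map_mk,
      boundaryMap_single hab, boundaryMap_single (f.map_adj hab), map_add, pushVertex_single]

lemma inducedMap_mem_cycleSpace [Fintype β] {x : Sym2 α → ZMod 2} (hx : x ∈ cycleSpace G) :
    inducedMap f x ∈ cycleSpace H := by
  obtain ⟨hxE, hxδ⟩ := hx
  refine ⟨inducedMap_mem_edgeSpace f hxE, ?_⟩
  rw [SetLike.mem_coe, LinearMap.mem_ker, boundaryMap_inducedMap f hxE, LinearMap.mem_ker.mp hxδ,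
    map_zero]

lemma edgeSpace_le_map_inducedMap [Fintype β]
    (hlift : ∀ e ∈ H.edgeSet, ∃ e₀ ∈ G.edgeSet, e₀.map f = e) :
    edgeSpace H ≤ (edgeSpace G).map (inducedMap f) := by
  rw [edgeSpace_eq_span, Submodule.span_le]
  rintro _ ⟨e, he, rfl⟩
  obtain ⟨e₀, he₀, rfl⟩ := hlift e he
  exact ⟨_, single_mem_edgeSpace he₀, inducedMap_single_of_mem_edgeSet f he₀⟩

theorem exists_mem_cycleSpace_inducedMap_eq [Fintype β]
    (hlift : ∀ e ∈ H.edgeSet, ∃ e₀ ∈ G.edgeSet, e₀.map f = e)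
    (hfib : ∀ u v, f u = f v → Pi.single u 1 + Pi.single v 1 ∈ collapsedBoundaries G f)
    {y : Sym2 β → ZMod 2} (hy : y ∈ cycleSpace H) :
    ∃ x ∈ cycleSpace G, inducedMap f x = y := by
  obtain ⟨hyE, hyδ⟩ := hy
  obtain ⟨x₀, hx₀, rfl⟩ := edgeSpace_le_map_inducedMap f hlift hyE
  have hδ : pushVertex f (boundaryMap G x₀) = 0 := by
    rw [← boundaryMap_inducedMap f hx₀]
    exact hyδ
  obtain ⟨w, ⟨hwE, hwK⟩, hw⟩ := mem_of_pushVertex_eq_zero _ hfib hδ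
  refine ⟨x₀ - w, ⟨sub_mem hx₀ hwE, ?_⟩, ?_⟩
  · rw [SetLike.mem_coe, LinearMap.mem_ker, map_sub, hw, sub_self]
  · rw [map_sub, LinearMap.mem_ker.mp hwK, sub_zero]

end Hom

section Eta

variable {G : SimpleGraph V} {k : ℕ}

lemma coe_symOfTuple (u : Fin k → V) :
    (symOfTuple k u : Multiset V) = Finset.univ.val.map u :=
  (Fin.univ_val_map u).symm

lemma coe_symOfTuple_update (u : Fin k → V) (i : Fin k) (c : V) :
    (symOfTuple k (update u i c) : Multiset V) = c ::ₘ (Finset.univ.erase i).val.map u := by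
  rw [coe_symOfTuple, ← Multiset.cons_erase (Finset.mem_univ_val i), Multiset.map_cons,
    update_self, ← Finset.erase_val]
  exact congrArg _ <| Multiset.map_congr rfl fun j hj =>
    update_of_ne (Finset.ne_of_mem_erase (Finset.mem_val.mp hj)) _ _

lemma coe_symOfTuple_eq_cons (u : Fin k → V) (i : Fin k) :
    (symOfTuple k u : Multiset V) = u i ::ₘ (Finset.univ.erase i).val.map u := by
  simpa using coe_symOfTuple_update u i (u i)

lemma symOfTuple_comp_perm (u : Fin k → V) (σ : Equiv.Perm (Fin k)) :
    symOfTuple k (u ∘ σ) = symOfTuple k u :=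
  Subtype.ext (Multiset.coe_eq_coe.mpr (σ.ofFn_comp_perm u))

lemma symOfTuple_surjective : Surjective (symOfTuple k : (Fin k → V) → Sym V k) := by
  intro m
  obtain ⟨l, hl⟩ := Quot.exists_rep m.1
  have hk : l.length = k := by rw [← m.2, ← hl]; rfl
  subst hk
  exact ⟨fun i => l[i], Subtype.ext ((congrArg _ List.ofFn_getElem).trans hl)⟩

lemma exists_perm_of_symOfTuple_eq {u v : Fin k → V} (h : symOfTuple k u = symOfTuple k v) :
    ∃ σ : Equiv.Perm (Fin k), v = u ∘ σ := by
  obtain ⟨_, -⟩ := exists_wellFoundedLT V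
  have hperm : (List.ofFn u).Perm (List.ofFn v) := Multiset.coe_eq_coe.mp (congrArg Subtype.val h)
  -- both tuples have the same sorted rearrangement
  have hsort : u ∘ Tuple.sort u = v ∘ Tuple.sort v :=
    List.ofFn_injective <| List.Perm.eq_of_sortedLE
      (Tuple.monotone_sort u).sortedLE_ofFn (Tuple.monotone_sort v).sortedLE_ofFn
      (((Tuple.sort u).ofFn_comp_perm u).trans
        (hperm.trans ((Tuple.sort v).ofFn_comp_perm v).symm))
  refine ⟨Tuple.sort u * (Tuple.sort v)⁻¹, ?_⟩
  rw [Equiv.Perm.coe_mul, ← comp_assoc, hsort, comp_assoc, ← Equiv.Perm.coe_mul, mul_inv_cancel,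
    Equiv.Perm.coe_one, comp_id]

lemma cartPow_adj_update {u : Fin k → V} {i : Fin k} {c : V} (h : G.Adj (u i) c) :
    (cartPow G k).Adj u (update u i c) := by
  refine (SimpleGraph.fromRel_adj _ _ _).mpr
    ⟨fun he => h.ne ?_, Or.inl ⟨i, ?_, fun j hj => ?_⟩⟩
  · simpa using congrFun he i
  · simpa using h
  · exact (update_of_ne hj _ _).symm

lemma cartPow_adj_iff {u v : Fin k → V} :
    (cartPow G k).Adj u v ↔ ∃ i, G.Adj (u i) (v i) ∧ v = update u i (v i) := by
  refine ⟨fun h => ?_, fun ⟨i, h, hv⟩ => hv ▸ cartPow_adj_update h⟩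
  obtain ⟨-, ⟨i, h, hv⟩ | ⟨i, h, hv⟩⟩ := (SimpleGraph.fromRel_adj _ _ _).mp h
  · exact ⟨i, h, (eq_update_iff.mpr ⟨rfl, fun j hj => (hv j hj).symm⟩)⟩
  · exact ⟨i, h.symm, (eq_update_iff.mpr ⟨rfl, fun j hj => hv j hj⟩)⟩

lemma reducedPow_adj_update {u : Fin k → V} {i : Fin k} {c : V} (h : G.Adj (u i) c) :
    (reducedPow G k).Adj (symOfTuple k u) (symOfTuple k (update u i c)) := by
  have hu := coe_symOfTuple_eq_cons u i
  have hc := coe_symOfTuple_update u i c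
  refine (SimpleGraph.fromRel_adj _ _ _).mpr
    ⟨fun he => h.ne ?_, Or.inl ⟨u i, c, h, _, hu, hc⟩⟩
  rwa [he, hc, Multiset.cons_inj_left, eq_comm] at hu

variable (G k) in
def etaHom : cartPow G k →g reducedPow G k where
  toFun := symOfTuple k
  map_rel' h := by
    obtain ⟨i, hi, hv⟩ := cartPow_adj_iff.mp h
    rw [hv]
    exact reducedPow_adj_update hi

variable (G) in
def updateHom (u : Fin k → V) (j : Fin k) : G →g cartPow G k where
  toFun c := update u j c
  map_rel' {c c'} h := by
    have := cartPow_adj_update (u := update u j c) (i := j) (c := c') (by simpa using h)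
    rwa [update_idem] at this

variable (G) in
def permHom (σ : Equiv.Perm (Fin k)) : cartPow G k →g cartPow G k where
  toFun x := x ∘ σ
  map_rel' {x y} h := by
    obtain ⟨i, hi, hy⟩ := cartPow_adj_iff.mp h
    refine cartPow_adj_iff.mpr ⟨σ.symm i, by simpa using hi, ?_⟩
    conv_lhs => rw [hy]
    rw [update_comp_equiv]
    simp

lemma exists_symOfTuple_update_eq {m m' : Sym V k} {a b : V} {f : Multiset V}
    (hm : (m : Multiset V) = a ::ₘ f) (hm' : (m' : Multiset V) = b ::ₘ f) :
    ∃ u i, u i = a ∧ symOfTuple k u = m ∧ symOfTuple k (update u i b) = m' := by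
  obtain ⟨u, rfl⟩ := symOfTuple_surjective m
  have ha : a ∈ (symOfTuple k u : Multiset V) := hm ▸ Multiset.mem_cons_self a f
  obtain ⟨i, rfl⟩ : ∃ i, u i = a := by simpa [coe_symOfTuple] using ha
  refine ⟨u, i, rfl, rfl, Sym.coe_injective ?_⟩
  rw [coe_symOfTuple_update, hm']
  rw [coe_symOfTuple_eq_cons u i, Multiset.cons_inj_right] at hm
  rw [hm]

lemma exists_edge_map_etaHom_eq {e : Sym2 (Sym V k)} (he : e ∈ (reducedPow G k).edgeSet) :
    ∃ e₀ ∈ (cartPow G k).edgeSet, e₀.map (etaHom G k) = e := by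
  induction e using Sym2.ind with
  | _ m m' =>
    obtain ⟨-, ⟨a, b, hab, f, hm, hm'⟩ | ⟨a, b, hab, f, hm', hm⟩⟩ :=
      (SimpleGraph.fromRel_adj _ _ _).mp (show (reducedPow G k).Adj m m' from he)
    · obtain ⟨u, i, rfl, rfl, rfl⟩ := exists_symOfTuple_update_eq hm hm'
      exact ⟨s(u, update u i b), cartPow_adj_update hab, rfl⟩
    · obtain ⟨u, i, rfl, rfl, rfl⟩ := exists_symOfTuple_update_eq hm' hm
      exact ⟨s(update u i b, u), (cartPow_adj_update hab).symm, rfl⟩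

variable [Fintype V] [DecidableEq V]

lemma single_add_single_comp_swap_mem (hG : G.Connected) (u : Fin k → V) (i j : Fin k) :
    Pi.single u 1 + Pi.single (u ∘ Equiv.swap i j) 1 ∈
      collapsedBoundaries (cartPow G k) (etaHom G k) := by
  obtain ⟨p⟩ := hG.preconnected (u i) (u j)
  -- `P` moves coordinate `j` from `u i` to `u j`; its image under the swap projects to the
  -- same chain and starts at the same point, so together they have boundary `u + u ∘ swap i j`
  let P := p.map (updateHom G u j)
  have hstart : update u j (u i) ∘ Equiv.swap i j = update u j (u i) := by
    ext x
    simp only [Equiv.comp_swap_eq_update, update_apply]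
    split_ifs <;> simp_all
  refine ⟨walkChain P + walkChain (P.map (permHom G (Equiv.swap i j))),
    ⟨add_mem (walkChain_mem_edgeSpace _) (walkChain_mem_edgeSpace _), ?_⟩, ?_⟩
  · rw [SetLike.mem_coe, LinearMap.mem_ker, map_add, inducedMap_walkChain_map_of_comp_eq _ _
      (fun x => symOfTuple_comp_perm x _), zmodTwo_add_self]
  · rw [map_add, boundaryMap_walkChain, boundaryMap_walkChain]
    change Pi.single (update u j (u i)) 1 + Pi.single (update u j (u j)) 1 +
      (Pi.single (update u j (u i) ∘ Equiv.swap i j) 1 +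
        Pi.single (update u j (u j) ∘ Equiv.swap i j) 1) = _
    rw [hstart, update_eq_self, add_comm (Pi.single _ 1) (Pi.single u 1),
      zmodTwo_add_add_add_cancel]

lemma single_add_single_comp_perm_mem (hG : G.Connected) (σ : Equiv.Perm (Fin k))
    (u : Fin k → V) :
    Pi.single u 1 + Pi.single (u ∘ σ) 1 ∈ collapsedBoundaries (cartPow G k) (etaHom G k) := by
  induction σ using Equiv.Perm.swap_induction_on generalizing u with
  | one => simp [zmodTwo_add_self]
  | swap_mul σ i j _ ih =>
    rw [Equiv.Perm.coe_mul, ← comp_assoc,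
      ← zmodTwo_add_add_add_cancel _ (Pi.single (u ∘ Equiv.swap i j) 1)]
    exact add_mem (single_add_single_comp_swap_mem hG u i j) (ih _)

lemma single_add_single_mem_of_symOfTuple_eq (hG : G.Connected) {u v : Fin k → V}
    (h : symOfTuple k u = symOfTuple k v) :
    Pi.single u 1 + Pi.single v 1 ∈ collapsedBoundaries (cartPow G k) (etaHom G k) := by
  obtain ⟨σ, rfl⟩ := exists_perm_of_symOfTuple_eq h
  exact single_add_single_comp_perm_mem hG σ u

end Eta

/-- For a connected graph `G`, the natural projection `η : G^k → G^(k)` (sending a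
tuple to its `S_k`-orbit, i.e. its multiset of coordinates) induces a linear map on
cycle spaces over `𝔽₂` which is surjective onto the cycle space of `G^(k)`. -/
theorem stmt_10 [Fintype V] [DecidableEq V] (G : SimpleGraph V) (hG : G.Connected) (k : ℕ) :
    (∀ x ∈ cycleSpace (cartPow G k), inducedMap (symOfTuple k) x ∈ cycleSpace (reducedPow G k))
      ∧ ∀ y ∈ cycleSpace (reducedPow G k),
          ∃ x ∈ cycleSpace (cartPow G k), inducedMap (symOfTuple k) x = y :=
  ⟨fun _ hx => inducedMap_mem_cycleSpace (etaHom G k) hx,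
    fun _ hy => exists_mem_cycleSpace_inducedMap_eq (etaHom G k)
      (fun _ he => exists_edge_map_etaHom_eq he)
      (fun _ _ h => single_add_single_mem_of_symOfTuple_eq hG h) hy⟩
end

section
/- The Cartesian square (ab □ cd)f, defined as the sum of edges acf·bcf + bcf·bdf + bdf·adf + adf·acf in the edge space of G^(k) over F_2, is zero if and only if the edges ab and cd of G are equal. -/
open Finset
open scoped Classical

variable {V W : Type*}

/-- The vertex `x·y·f` of `G^(k)`, for `f` a monomial of degree `k-2`. -/
def symCons2 (k : ℕ) (x y : V) (f : Multiset V) (h : Multiset.card f + 2 = k) : Sym V k :=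
  ⟨x ::ₘ y ::ₘ f, by simp [Multiset.card_cons]; omega⟩

/-- The indicator vector of a single edge in the `𝔽₂` edge space. -/
noncomputable def edgeVec {α : Type*} (e : Sym2 α) : Sym2 α → ZMod 2 :=
  fun e' => if e' = e then 1 else 0

/-- The Cartesian square `(ab □ cd)f` in `G^(k)`: the sum (over `𝔽₂`) of the four
edges `acf·bcf + bcf·bdf + bdf·adf + adf·acf`. -/
noncomputable def cartSquare (k : ℕ) (a b c d : V) (f : Multiset V) (h : Multiset.card f + 2 = k) :
    Sym2 (Sym V k) → ZMod 2 :=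
  edgeVec s(symCons2 k a c f h, symCons2 k b c f h)
    + edgeVec s(symCons2 k b c f h, symCons2 k b d f h)
    + edgeVec s(symCons2 k b d f h, symCons2 k a d f h)
    + edgeVec s(symCons2 k a d f h, symCons2 k a c f h)

/-!
The four vertices `acf, bcf, bdf, adf` form a closed walk of length four in `G^(k)`. Over `𝔽₂`
the edge sum of a closed walk `p q r s` vanishes exactly when the walk backtracks, i.e.
`p = r` or `q = s`: otherwise some edge occurs once. For the square this means `acf = bdf` or
`bcf = adf`, and since `a ≠ b` either one happens exactly when `{a, b} = {c, d}`.
-/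

theorem Multiset.cons_cons_eq_cons_cons_iff {α : Type*} {x y u v : α} (f : Multiset α) :
    x ::ₘ y ::ₘ f = u ::ₘ v ::ₘ f ↔ s(x, y) = s(u, v) :=
  calc x ::ₘ y ::ₘ f = u ::ₘ v ::ₘ f ↔ x ::ₘ y ::ₘ 0 + f = u ::ₘ v ::ₘ 0 + f := by
        simp only [Multiset.cons_add, zero_add]
    _ ↔ x ::ₘ y ::ₘ 0 = u ::ₘ v ::ₘ 0 := Multiset.add_left_inj
    _ ↔ Sym2.equivMultiset α s(x, y) = Sym2.equivMultiset α s(u, v) := by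
      rw [Subtype.ext_iff]; rfl
    _ ↔ s(x, y) = s(u, v) := (Sym2.equivMultiset α).injective.eq_iff

theorem symCons2_eq_symCons2_iff {k : ℕ} {x y u v : V} {f : Multiset V}
    {h : Multiset.card f + 2 = k} :
    symCons2 k x y f h = symCons2 k u v f h ↔ s(x, y) = s(u, v) :=
  Sym.ext_iff.trans (Multiset.cons_cons_eq_cons_cons_iff f)

section Cycle4

variable {α : Type*}

noncomputable def edgeVecCycle4 (p q r s : α) : Sym2 α → ZMod 2 :=
  edgeVec s(p, q) + edgeVec s(q, r) + edgeVec s(r, s) + edgeVec s(s, p)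

theorem edgeVecCycle4_rotate (p q r s : α) :
    edgeVecCycle4 p q r s = edgeVecCycle4 q r s p := by
  unfold edgeVecCycle4
  abel

theorem edgeVecCycle4_apply_self {p q r s : α} (hpr : p ≠ r) (hqs : q ≠ s) (hqr : q ≠ r) :
    edgeVecCycle4 p q r s s(p, q) = 1 := by
  simp only [edgeVecCycle4, edgeVec, Pi.add_apply, Sym2.eq_iff]
  grind

theorem edgeVecCycle4_eq_zero_iff {p q r s : α} :
    edgeVecCycle4 p q r s = 0 ↔ p = r ∨ q = s := by
  constructor
  · intro h
    by_contra! ⟨hpr, hqs⟩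
    by_cases hqr : q = r
    · have := congrFun (edgeVecCycle4_rotate p q r s ▸ h) s(q, r)
      rw [edgeVecCycle4_apply_self hqs hpr.symm (hqr ▸ hqs)] at this
      exact one_ne_zero this
    · have := congrFun h s(p, q)
      rw [edgeVecCycle4_apply_self hpr hqs hqr] at this
      exact one_ne_zero this
  · rintro (rfl | rfl) <;> ext e <;>
      simp only [edgeVecCycle4, edgeVec, Sym2.eq_swap, Pi.add_apply, Pi.zero_apply] <;>
      split_ifs <;> decide

end Cycle4

theorem stmt_15_general (G : SimpleGraph V) (k : ℕ) (a b c d : V)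
    (hab : G.Adj a b)
    (f : Multiset V) (h : Multiset.card f + 2 = k) :
    cartSquare k a b c d f h = 0 ↔ s(a, b) = s(c, d) := by
  change edgeVecCycle4 _ _ _ _ = 0 ↔ _
  rw [edgeVecCycle4_eq_zero_iff, symCons2_eq_symCons2_iff, symCons2_eq_symCons2_iff]
  have hne := hab.ne
  simp only [Sym2.eq_iff]
  grind

/-- The Cartesian square `(ab □ cd)f` (the `𝔽₂`-sum of its four edges) is zero
if and only if the edges `ab` and `cd` of `G` coincide. -/
theorem stmt_15 (G : SimpleGraph V) (k : ℕ) (a b c d : V)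
    (hab : G.Adj a b) (hcd : G.Adj c d)
    (f : Multiset V) (h : Multiset.card f + 2 = k) :
    cartSquare k a b c d f h = 0 ↔ s(a, b) = s(c, d) :=
  stmt_15_general G k a b c d hab f h
end

section
/- Let G be a connected graph with spanning tree T rooted at a_1, vertices indexed by a breadth-first traversal. Define Υ = {(e_i □ e_j)f : 2 ≤ i < j ≤ v, f ∈ M_{k-2}(a_1,...,a_j)} and Ω = {(a_ℓ a_m □ e_j)f : a_ℓ a_m ∈ E(G)\E(T), 2 ≤ j ≤ v, f ∈ M_{k-2}(a_1,...,a_j)}, where e_j is the tree edge whose endpoint farther from the root is a_j. Then Υ ∪ Ω is a linearly independent set in the cycle space of G^(k) over F_2. -/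
open Finset
open scoped Classical

variable {V W : Type*}

/-- The set `Υ` of Cartesian squares `(e_i □ e_j)f`, where `e_i`, `e_j` are tree
edges (given by the parent function, with deeper endpoints `i < j`) and
`f ∈ M_{k-2}(a_1, …, a_j)` (a monomial in the indeterminates indexed `≤ j`).
Vertices are `0`-indexed, with root `0`. -/
def upsilonSet {n : ℕ} (k : ℕ) (parent : Fin (n + 1) → Fin (n + 1)) :
    Set (Sym2 (Sym (Fin (n + 1)) k) → ZMod 2) :=
  {x | ∃ i j : Fin (n + 1), 0 < i ∧ i < j ∧
    ∃ (f : Multiset (Fin (n + 1))) (h : Multiset.card f + 2 = k),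
      (∀ a ∈ f, a ≤ j) ∧ x = cartSquare k (parent i) i (parent j) j f h}

/-- The set `Ω` of Cartesian squares `(a_ℓ a_m □ e_j)f`, where `a_ℓ a_m` is a
non-tree edge of `G`, `e_j` is a tree edge with deeper endpoint `j ≠ 0`, and
`f ∈ M_{k-2}(a_1, …, a_j)`. -/
def omegaSet {n : ℕ} (k : ℕ) (G T : SimpleGraph (Fin (n + 1)))
    (parent : Fin (n + 1) → Fin (n + 1)) :
    Set (Sym2 (Sym (Fin (n + 1)) k) → ZMod 2) :=
  {x | ∃ l m : Fin (n + 1), G.Adj l m ∧ ¬ T.Adj l m ∧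
    ∃ j : Fin (n + 1), j ≠ 0 ∧
      ∃ (f : Multiset (Fin (n + 1))) (h : Multiset.card f + 2 = k),
        (∀ a ∈ f, a ≤ j) ∧ x = cartSquare k l m (parent j) j f h}

/-! Every square `(ab □ e_d)f`, with `e_d` the tree edge from `parent d` to `d`, contains the
edge `bdf – adf`, its leading edge. Weigh squares lexicographically, first by whether `ab` is a
non-tree edge, then by `d + Σ f`. Matching monomials shows that if the leading edge of `p`
occurs in a different admissible square `q`, then `q` is strictly heavier. Hence in a vanishing
combination the leading edge of a heaviest square with nonzero coefficient receives a
contribution from that square alone, which is absurd. -/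

theorem linearIndepOn_image_of_triangular {P α R β : Type*} [Ring R] [NoZeroDivisors R]
    [LinearOrder β] {g : P → α → R} {S : Set P} (lead : P → α) (w : P → β)
    (hlead : ∀ p ∈ S, g p (lead p) ≠ 0)
    (htri : ∀ p ∈ S, ∀ q ∈ S, g q (lead p) ≠ 0 → w p < w q ∨ g q = g p) :
    LinearIndepOn R id (g '' S) := by
  rw [← linearIndependent_subtype_iff, linearIndependent_iff]
  intro l hl
  by_contra hl0
  choose pre hpreS hpre using fun x : g '' S => x.2
  obtain ⟨x₀, hx₀, hmax⟩ := l.support.exists_max_image (w ∘ pre)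
    (Finsupp.support_nonempty_iff.mpr hl0)
  have hsum := congrFun hl (lead (pre x₀))
  rw [Finsupp.linearCombination_apply, Finsupp.sum, Finset.sum_apply,
    Finset.sum_eq_single_of_mem x₀ hx₀] at hsum
  · have hlead₀ : x₀.1 (lead (pre x₀)) ≠ 0 := hpre x₀ ▸ hlead _ (hpreS x₀)
    exact Finsupp.mem_support_iff.mp hx₀ ((mul_eq_zero.mp hsum).resolve_right hlead₀)
  · intro x hx hne
    rw [Pi.smul_apply, smul_eq_mul]
    by_contra hval
    have hval : g (pre x) (lead (pre x₀)) ≠ 0 := (hpre x).symm ▸ right_ne_zero_of_mul hval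
    rcases htri _ (hpreS x₀) _ (hpreS x) hval with hlt | heq
    · exact (hmax x hx).not_gt hlt
    · exact hne (Subtype.ext (by rw [← hpre x, ← hpre x₀, heq]))

theorem Multiset.sym2_cons_eq_sym2_cons {x₁ x₂ y₁ y₂ : V} {g g' : Multiset V} (hx : x₁ ≠ x₂)
    (e : s(x₁ ::ₘ g, x₂ ::ₘ g) = s(y₁ ::ₘ g', y₂ ::ₘ g')) :
    s(x₁, x₂) = s(y₁, y₂) ∧ g = g' := by
  have key : ∀ {y₁ y₂ : V}, x₁ ::ₘ g = y₁ ::ₘ g' → x₂ ::ₘ g = y₂ ::ₘ g' →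
      x₁ = y₁ ∧ x₂ = y₂ ∧ g = g' := by
    intro y₁ y₂ e₁ e₂
    have hx₁ : x₁ = y₁ := by
      by_contra hne
      have c₁ := congrArg (Multiset.count x₁) e₁
      have c₂ := congrArg (Multiset.count x₁) e₂
      rw [Multiset.count_cons_self, Multiset.count_cons_of_ne hne] at c₁
      rw [Multiset.count_cons_of_ne hx] at c₂
      have := Multiset.count_le_count_cons x₁ y₂ g'
      omega
    subst hx₁
    obtain rfl := (Multiset.cons_inj_right x₁).mp e₁
    exact ⟨rfl, (Multiset.cons_inj_left g).mp e₂, rfl⟩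
  rcases Sym2.eq_iff.mp e with ⟨e₁, e₂⟩ | ⟨e₁, e₂⟩
  · obtain ⟨rfl, rfl, rfl⟩ := key e₁ e₂
    exact ⟨rfl, rfl⟩
  · obtain ⟨rfl, rfl, rfl⟩ := key e₁ e₂
    exact ⟨Sym2.eq_swap, rfl⟩

theorem Multiset.eq_of_cons_eq_cons_of_forall_le {α : Type*} [PartialOrder α] {d d' : α}
    {f f' : Multiset α} (hf : ∀ z ∈ f, z ≤ d) (hf' : ∀ z ∈ f', z ≤ d')
    (e : d ::ₘ f = d' ::ₘ f') : d = d' ∧ f = f' := by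
  have le_of_mem {d : α} {f : Multiset α} (hf : ∀ z ∈ f, z ≤ d) {z} (hz : z ∈ d ::ₘ f) : z ≤ d :=
    (Multiset.mem_cons.mp hz).elim le_of_eq (hf z)
  have hd : d = d' := le_antisymm (le_of_mem hf' (e ▸ Multiset.mem_cons_self d f))
    (le_of_mem hf (e ▸ Multiset.mem_cons_self d' f'))
  subst hd
  exact ⟨rfl, (Multiset.cons_inj_right d).mp e⟩

theorem symCons2_comm (k : ℕ) (x y : V) (f : Multiset V) (h : Multiset.card f + 2 = k) :
    symCons2 k x y f h = symCons2 k y x f h :=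
  Subtype.ext (Multiset.cons_swap x y f)

theorem symCons2_edge_eq {k : ℕ} {x₁ x₂ y₁ y₂ z z' : V} {f f' : Multiset V}
    {h : Multiset.card f + 2 = k} {h' : Multiset.card f' + 2 = k} (hx : x₁ ≠ x₂)
    (e : s(symCons2 k x₁ z f h, symCons2 k x₂ z f h)
      = s(symCons2 k y₁ z' f' h', symCons2 k y₂ z' f' h')) :
    s(x₁, x₂) = s(y₁, y₂) ∧ z ::ₘ f = z' ::ₘ f' :=
  Multiset.sym2_cons_eq_sym2_cons hx (congrArg (Sym2.map Subtype.val) e)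

theorem cartSquare_comm (k : ℕ) (a b c d : V) (f : Multiset V) (h : Multiset.card f + 2 = k) :
    cartSquare k a b c d f h = cartSquare k b a c d f h := by
  unfold cartSquare
  conv_rhs => rw [Sym2.eq_swap (a := symCons2 k b c f h) (b := symCons2 k a c f h),
    Sym2.eq_swap (a := symCons2 k a c f h) (b := symCons2 k a d f h),
    Sym2.eq_swap (a := symCons2 k a d f h) (b := symCons2 k b d f h),
    Sym2.eq_swap (a := symCons2 k b d f h) (b := symCons2 k b c f h)]
  abel

theorem cartSquare_apply_ne_zero {k : ℕ} {a b c d : V} {f : Multiset V}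
    {h : Multiset.card f + 2 = k} {e : Sym2 (Sym V k)} (he : cartSquare k a b c d f h e ≠ 0) :
    e = s(symCons2 k a c f h, symCons2 k b c f h) ∨ e = s(symCons2 k b c f h, symCons2 k b d f h) ∨
      e = s(symCons2 k b d f h, symCons2 k a d f h) ∨
      e = s(symCons2 k a d f h, symCons2 k a c f h) := by
  by_contra! hne
  obtain ⟨h₁, h₂, h₃, h₄⟩ := hne
  simp [cartSquare, edgeVec, h₁, h₂, h₃, h₄] at he

/-- `⟨a, b, d, f, _⟩` encodes the square `(ab □ e_d)f`, where `e_d` joins `parent d` to `d`. -/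
structure SquareData (m k : ℕ) where
  a : Fin m
  b : Fin m
  d : Fin m
  f : Multiset (Fin m)
  card_f : Multiset.card f + 2 = k

namespace SquareData

variable {m k : ℕ} (T : SimpleGraph (Fin m)) (parent : Fin m → Fin m)

def vertex (p : SquareData m k) (x y : Fin m) : Sym (Fin m) k :=
  symCons2 k x y p.f p.card_f

noncomputable def square (p : SquareData m k) : Sym2 (Sym (Fin m) k) → ZMod 2 :=
  cartSquare k p.a p.b (parent p.d) p.d p.f p.card_f

def lead (p : SquareData m k) : Sym2 (Sym (Fin m) k) :=
  s(p.vertex p.b p.d, p.vertex p.a p.d)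

noncomputable def weight (p : SquareData m k) : Bool ×ₗ ℕ :=
  toLex (decide (s(p.a, p.b) ∉ T.edgeSet), p.d.val + (p.f.map Fin.val).sum)

structure IsAdmissible (p : SquareData m k) : Prop where
  a_ne_b : p.a ≠ p.b
  adj_parent : T.Adj (parent p.d) p.d
  parent_lt : parent p.d < p.d
  le_d : ∀ z ∈ p.f, z ≤ p.d
  lt_d_of_adj : T.Adj p.a p.b → p.a < p.d ∧ p.b < p.d

variable {T parent}

theorem vertex_comm (p : SquareData m k) (x y : Fin m) : p.vertex x y = p.vertex y x :=
  symCons2_comm k x y p.f p.card_f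

theorem weight_lt_of_sym2_eq {p q : SquareData m k} {z : Fin m}
    (hpair : s(p.a, p.b) = s(q.a, q.b)) (hz : z < q.d) (hf : p.d ::ₘ p.f = z ::ₘ q.f) :
    p.weight T < q.weight T := by
  have hsum := congrArg (fun g : Multiset (Fin m) => (g.map Fin.val).sum) hf
  simp only [Multiset.map_cons, Multiset.sum_cons] at hsum
  rw [weight, weight, hpair, Prod.Lex.toLex_lt_toLex]
  exact Or.inr ⟨rfl, by simp only; omega⟩

theorem weight_lt_of_sym2_eq_parent {p q : SquareData m k} {z : Fin m}
    (hp : p.IsAdmissible T parent) (hq : q.IsAdmissible T parent)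
    (hpair : s(p.a, p.b) = s(parent q.d, q.d)) (hz : z = q.a ∨ z = q.b)
    (hf : p.d ::ₘ p.f = z ::ₘ q.f) : p.weight T < q.weight T := by
  have hpT : s(p.a, p.b) ∈ T.edgeSet := hpair ▸ hq.adj_parent
  by_cases hqT : s(q.a, q.b) ∈ T.edgeSet
  · exfalso
    have hzd : z < q.d := by
      obtain ⟨ha, hb⟩ := hq.lt_d_of_adj hqT
      rcases hz with rfl | rfl <;> assumption
    have hdp : p.d ≤ q.d := by
      rcases Multiset.mem_cons.mp (hf ▸ Multiset.mem_cons_self p.d p.f) with h | h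
      · exact h.le.trans hzd.le
      · exact hq.le_d _ h
    have hdq : q.d < p.d := by
      obtain ⟨ha, hb⟩ := hp.lt_d_of_adj hpT
      rcases Sym2.mem_iff.mp (hpair ▸ Sym2.mem_mk_right (parent q.d) q.d) with h | h <;>
        rw [h] <;> assumption
    exact (hdp.trans_lt hdq).false
  · rw [weight, weight, Prod.Lex.toLex_lt_toLex]
    exact Or.inl (by simp [hpT, hqT])

theorem square_eq_of_sym2_eq {p q : SquareData m k} (hp : ∀ z ∈ p.f, z ≤ p.d)
    (hq : ∀ z ∈ q.f, z ≤ q.d) (hpair : s(p.a, p.b) = s(q.a, q.b))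
    (hf : p.d ::ₘ p.f = q.d ::ₘ q.f) : q.square parent = p.square parent := by
  obtain ⟨hd, hf'⟩ := Multiset.eq_of_cons_eq_cons_of_forall_le hp hq hf
  obtain ⟨a, b, d, f, h⟩ := p
  obtain ⟨a', b', d', f', h'⟩ := q
  dsimp only at hd hf' hpair
  subst hd hf'
  rcases Sym2.eq_iff.mp hpair with ⟨rfl, rfl⟩ | ⟨rfl, rfl⟩
  · rfl
  · exact cartSquare_comm ..

theorem sym2_eq_of_lead_eq {p q : SquareData m k} (hp : p.a ≠ p.b) {y₁ y₂ z : Fin m}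
    (h : p.lead = s(q.vertex y₁ z, q.vertex y₂ z)) :
    s(p.a, p.b) = s(y₂, y₁) ∧ p.d ::ₘ p.f = z ::ₘ q.f := by
  obtain ⟨hpair, hf⟩ := symCons2_edge_eq hp.symm h
  exact ⟨Sym2.eq_swap.trans (hpair.trans Sym2.eq_swap), hf⟩

theorem weight_lt_of_lead_eq {p q : SquareData m k} (hp : p.IsAdmissible T parent)
    (hq : q.IsAdmissible T parent)
    (h : p.lead = s(q.vertex q.a (parent q.d), q.vertex q.b (parent q.d)) ∨
      p.lead = s(q.vertex q.b (parent q.d), q.vertex q.b q.d) ∨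
      p.lead = s(q.vertex q.a q.d, q.vertex q.a (parent q.d))) :
    p.weight T < q.weight T := by
  rcases h with h | h | h
  · obtain ⟨hpair, hf⟩ := sym2_eq_of_lead_eq hp.a_ne_b h
    exact weight_lt_of_sym2_eq (hpair.trans Sym2.eq_swap) hq.parent_lt hf
  · rw [q.vertex_comm q.b, q.vertex_comm q.b] at h
    obtain ⟨hpair, hf⟩ := sym2_eq_of_lead_eq hp.a_ne_b h
    exact weight_lt_of_sym2_eq_parent hp hq (hpair.trans Sym2.eq_swap) (Or.inr rfl) hf
  · rw [q.vertex_comm q.a, q.vertex_comm q.a] at h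
    obtain ⟨hpair, hf⟩ := sym2_eq_of_lead_eq hp.a_ne_b h
    exact weight_lt_of_sym2_eq_parent hp hq hpair (Or.inl rfl) hf

theorem square_lead {p : SquareData m k} (hp : p.IsAdmissible T parent) :
    p.square parent p.lead = 1 := by
  have hne (h) := (weight_lt_of_lead_eq (T := T) hp hp h).false
  simp only [imp_false, not_or] at hne
  obtain ⟨h₁, h₂, h₄⟩ := hne
  simp only [lead, vertex] at h₁ h₂ h₄
  simp [square, cartSquare, lead, vertex, edgeVec, h₁, h₂, h₄]

theorem weight_lt_or_square_eq {p q : SquareData m k} (hp : p.IsAdmissible T parent)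
    (hq : q.IsAdmissible T parent) (h : q.square parent p.lead ≠ 0) :
    p.weight T < q.weight T ∨ q.square parent = p.square parent := by
  rcases cartSquare_apply_ne_zero h with h | h | h | h
  · exact Or.inl (weight_lt_of_lead_eq hp hq (Or.inl h))
  · exact Or.inl (weight_lt_of_lead_eq hp hq (Or.inr (Or.inl h)))
  · obtain ⟨hpair, hf⟩ := sym2_eq_of_lead_eq hp.a_ne_b h
    exact Or.inr (square_eq_of_sym2_eq hp.le_d hq.le_d hpair hf)
  · exact Or.inl (weight_lt_of_lead_eq hp hq (Or.inr (Or.inr h)))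

end SquareData

theorem linearIndepOn_square_admissible {m k : ℕ} (T : SimpleGraph (Fin m))
    (parent : Fin m → Fin m) :
    LinearIndepOn (ZMod 2) id
      (SquareData.square parent '' {p : SquareData m k | p.IsAdmissible T parent}) :=
  linearIndepOn_image_of_triangular SquareData.lead (SquareData.weight T)
    (fun _ hp => by rw [SquareData.square_lead hp]; exact one_ne_zero)
    (fun _ hp _ hq => SquareData.weight_lt_or_square_eq hp hq)

theorem upsilonSet_union_omegaSet_subset {v k : ℕ} {G T : SimpleGraph (Fin (v + 1))}
    {parent : Fin (v + 1) → Fin (v + 1)}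
    (hpar : ∀ j, j ≠ 0 → T.Adj (parent j) j ∧ parent j < j) :
    upsilonSet k parent ∪ omegaSet k G T parent ⊆
      SquareData.square parent '' {p : SquareData (v + 1) k | p.IsAdmissible T parent} := by
  rintro x (⟨i, j, hi, hij, f, h, hf, rfl⟩ | ⟨a, b, hG, hnT, j, hj, f, h, hf, rfl⟩)
  · have hi_lt := (hpar i hi.ne').2
    obtain ⟨hj_adj, hj_lt⟩ := hpar j (hi.trans hij).ne'
    exact ⟨⟨parent i, i, j, f, h⟩,
      ⟨hi_lt.ne, hj_adj, hj_lt, hf, fun _ => ⟨hi_lt.trans hij, hij⟩⟩, rfl⟩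
  · obtain ⟨hj_adj, hj_lt⟩ := hpar j hj
    exact ⟨⟨a, b, j, f, h⟩, ⟨hG.ne, hj_adj, hj_lt, hf, fun h => (hnT h).elim⟩, rfl⟩

theorem stmt_16_general
    (v k : ℕ) (G T : SimpleGraph (Fin (v + 1)))
    (parent : Fin (v + 1) → Fin (v + 1))
    (hpar : ∀ j, j ≠ 0 → T.Adj (parent j) j ∧ parent j < j) :
    LinearIndependent (ZMod 2)
      ((↑) : ↥(upsilonSet k parent ∪ omegaSet k G T parent) →
        (Sym2 (Sym (Fin (v + 1)) k) → ZMod 2)) :=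
  linearIndependent_subtype_iff.mpr
    ((linearIndepOn_square_admissible T parent).mono (upsilonSet_union_omegaSet_subset hpar))

/-- The set `B = Υ ∪ Ω` of Cartesian squares determined by a breadth-first rooted
spanning tree `T` of `G` is linearly independent in the cycle space of `G^(k)`
over `𝔽₂`. -/
theorem stmt_16
    (v k : ℕ) (G T : SimpleGraph (Fin (v + 1)))
    (hTG : T ≤ G) (hT : T.IsTree)
    (parent : Fin (v + 1) → Fin (v + 1))
    (hpar : ∀ j, j ≠ 0 → T.Adj (parent j) j ∧ parent j < j)
    (hbfs : ∀ i j : Fin (v + 1), i ≤ j → T.dist 0 i ≤ T.dist 0 j) :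
    LinearIndependent (ZMod 2)
      ((↑) : ↥(upsilonSet k parent ∪ omegaSet k G T parent) →
        (Sym2 (Sym (Fin (v + 1)) k) → ZMod 2)) :=
  stmt_16_general v k G T parent hpar
end

section
/- A cycle basis B = {B_1, ..., B_β} of a graph G is a minimum cycle basis if and only if every element C of the cycle space of G over F_2 can be written as a sum of basis elements B_i each satisfying |B_i| ≤ |C|, where |·| denotes the number of edges. -/
open Finset
open scoped Classical

variable {V W : Type*}

/-- The length (number of edges) of an element of the `𝔽₂` edge space. -/
noncomputable def cycLen {α : Type*} (x : Sym2 α → ZMod 2) : ℕ :=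
  Set.ncard {e | x e ≠ 0}

/-- `x` is (the edge-indicator vector of) a cycle of the graph `H`. -/
def IsCycleVec {α : Type*} (H : SimpleGraph α) (x : Sym2 α → ZMod 2) : Prop :=
  ∃ (a : α) (w : H.Walk a a), w.IsCycle ∧ x = fun e => if e ∈ w.edges then 1 else 0

/-- `B` is a cycle basis of `H`: a basis of the `𝔽₂` cycle space of `H`
consisting of cycles. -/
def IsCycleBasis {α : Type*} [Fintype α] [DecidableEq α] (H : SimpleGraph α)
    (B : Finset (Sym2 α → ZMod 2)) : Prop :=
  (∀ x ∈ B, IsCycleVec H x)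
    ∧ LinearIndependent (ZMod 2) ((↑) : ↥(B : Set (Sym2 α → ZMod 2)) → (Sym2 α → ZMod 2))
    ∧ Submodule.span (ZMod 2) (B : Set (Sym2 α → ZMod 2)) = cycleSpace H

/-- `B` is a minimum cycle basis (MCB) of `H`: a cycle basis minimizing the total
length `ℓ(B) = ∑_{C ∈ B} |C|` among all cycle bases. -/
noncomputable def basisLen {α : Type*} (B : Finset (Sym2 α → ZMod 2)) : ℕ :=
  ∑ x ∈ B, cycLen x

/-- `B` is a minimum cycle basis of `H`. -/
def IsMCB {α : Type*} [Fintype α] [DecidableEq α] (H : SimpleGraph α)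
    (B : Finset (Sym2 α → ZMod 2)) : Prop :=
  IsCycleBasis H B ∧ ∀ B' : Finset (Sym2 α → ZMod 2), IsCycleBasis H B' → basisLen B ≤ basisLen B' 


/-!
Minimum cycle bases are the minimum-weight bases of the cycle space drawn from the cycles, so the
proof is the exchange argument for weighted matroids. Every element `C` of the cycle space is a
sum of cycles no longer than `C`: its support has even degrees everywhere, so it is not a forest
and contains a cycle `D`, and `C + D` has strictly smaller support. If a basis element longer than
`|C|` occurred in the representation of `C`, it would occur in that of one of these short cycles,
and exchanging the two would give a shorter basis. Conversely, if every `C` is spanned by basis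
elements of length `≤ |C|`, then for each `k` the elements of length `≤ k` of any other basis
lie in the span of the elements of length `≤ k` of the given basis, so there are at most as many
of them; summing over `k` compares the total lengths.
-/

section LinearAlgebra

open Submodule

variable {K M : Type*} [Field K] [AddCommGroup M] [Module K M]

theorem exists_notMem_span_erase_of_notMem_span_filter {B : Finset M}
    (hB : LinearIndepOn K id (B : Set M)) (p : M → Prop) [DecidablePred p] {a : M}
    (ha : a ∈ span K (B : Set M))
    (hap : a ∉ span K (({x ∈ B | p x} : Finset M) : Set M)) :
    ∃ x ∈ B, ¬ p x ∧ a ∉ span K ((B.erase x : Finset M) : Set M) := by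
  obtain ⟨f, -, rfl⟩ := mem_span_finset.mp ha
  by_contra! h
  have hcoeff : ∀ x ∈ B, ¬ p x → f x = 0 := by
    intro x hx hpx
    refine hB.eq_zero_of_smul_mem_span hx (f x) ?_
    have hsplit := Finset.add_sum_erase B (fun i => f i • i) hx
    rw [Set.image_id, ← Finset.coe_erase, id, eq_sub_of_add_eq hsplit]
    exact sub_mem (h x hx hpx) (sum_mem fun i hi => smul_mem _ _ (subset_span hi))
  refine hap ?_
  rw [← Finset.sum_filter_add_sum_filter_not B p,
    Finset.sum_eq_zero (s := {x ∈ B | ¬ p x}) fun x hx => ?_, add_zero]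
  · exact sum_mem fun i hi => smul_mem _ _ (subset_span hi)
  · rw [Finset.mem_filter] at hx
    rw [hcoeff x hx.1 hx.2, zero_smul]

theorem span_insert_erase_eq {B : Finset M} {x a : M} (hx : x ∈ B) (ha : a ∈ span K (B : Set M))
    (ha' : a ∉ span K ((B.erase x : Finset M) : Set M)) :
    span K ((insert a (B.erase x) : Finset M) : Set M) = span K (B : Set M) := by
  have hB : (B : Set M) = insert x ((B.erase x : Finset M) : Set M) := by
    rw [← Finset.coe_insert, Finset.insert_erase hx]
  rw [Finset.coe_insert]
  apply le_antisymm
  · exact span_le.mpr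
      (Set.insert_subset ha ((Finset.coe_subset.mpr (B.erase_subset x)).trans subset_span))
  · rw [hB] at ha ⊢
    exact span_le.mpr (Set.insert_subset (mem_span_insert_exchange ha ha')
      (subset_span.trans (span_mono (Set.subset_insert _ _))))

theorem card_le_card_of_subset_span {s t : Finset M} (hs : LinearIndepOn K id (s : Set M))
    (hst : (s : Set M) ⊆ span K (t : Set M)) : #s ≤ #t :=
  calc #s = Module.finrank K (span K (s : Set M)) := (finrank_span_finset_eq_card hs).symm
    _ ≤ Module.finrank K (span K (t : Set M)) := Submodule.finrank_mono (span_le.mpr hst)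
    _ ≤ #t := finrank_span_finset_le_card t

theorem mem_span_filter_le_of_isMinimal (w : M → ℕ) {P : M → Prop} {B : Finset M}
    (hP : ∀ x ∈ B, P x) (hB : LinearIndepOn K id (B : Set M))
    (hmin : ∀ B' : Finset M, (∀ x ∈ B', P x) → LinearIndepOn K id (B' : Set M) →
      span K (B' : Set M) = span K (B : Set M) → ∑ x ∈ B, w x ≤ ∑ x ∈ B', w x)
    {t : ℕ} {S : Set M} (hSP : ∀ a ∈ S, P a ∧ w a ≤ t) (hS : S ⊆ span K (B : Set M))
    {C : M} (hC : C ∈ span K S) : C ∈ span K (({x ∈ B | w x ≤ t} : Finset M) : Set M) := by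
  refine span_le.mpr (fun a haS => ?_) hC
  by_contra hat
  obtain ⟨x, hxB, hxt, hax⟩ :=
    exists_notMem_span_erase_of_notMem_span_filter hB (w · ≤ t) (hS haS) hat
  have haB : a ∉ B.erase x := fun h => hax (subset_span h)
  have hle := hmin (insert a (B.erase x))
    (fun y hy => (Finset.mem_insert.mp hy).elim (· ▸ (hSP a haS).1)
      fun hy => hP y (Finset.mem_of_mem_erase hy))
    (by
      rw [Finset.coe_insert]
      exact (hB.mono (Finset.coe_subset.mpr (B.erase_subset x))).id_insert hax)
    (span_insert_erase_eq hxB (hS haS) hax)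
  rw [Finset.sum_insert haB, ← Finset.add_sum_erase B w hxB] at hle
  have := (hSP a haS).2
  omega

theorem Finset.sum_eq_sum_range_card_filter_lt {α : Type*} (s : Finset α) (w : α → ℕ)
    {N : ℕ} (hN : ∀ x ∈ s, w x ≤ N) :
    ∑ x ∈ s, w x = ∑ k ∈ range N, #{x ∈ s | k < w x} := by
  simp only [Finset.card_filter]
  rw [Finset.sum_comm]
  refine Finset.sum_congr rfl fun x hx => ?_
  have hrange : {k ∈ range N | k < w x} = range (w x) := by
    ext k
    simp only [Finset.mem_filter, Finset.mem_range]
    have := hN x hx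
    omega
  rw [← Finset.card_filter, hrange, Finset.card_range]

theorem sum_le_sum_of_forall_mem_span_filter_le (w : M → ℕ) {B B' : Finset M}
    (hB : LinearIndepOn K id (B : Set M)) (hB' : LinearIndepOn K id (B' : Set M))
    (hspan : span K (B' : Set M) = span K (B : Set M))
    (h : ∀ C ∈ span K (B : Set M),
      C ∈ span K (({x ∈ B | w x ≤ w C} : Finset M) : Set M)) :
    ∑ x ∈ B, w x ≤ ∑ x ∈ B', w x := by
  have hcard : #B = #B' := by
    rw [← finrank_span_finset_eq_card hB, ← finrank_span_finset_eq_card hB', hspan]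
  have hlow (k : ℕ) : #{x ∈ B' | w x ≤ k} ≤ #{x ∈ B | w x ≤ k} := by
    refine card_le_card_of_subset_span (hB'.mono (Finset.coe_subset.mpr (B'.filter_subset _)))
      fun c hc => ?_
    rw [Finset.coe_filter] at hc
    have hcB : c ∈ span K (B : Set M) := hspan ▸ subset_span hc.1
    refine span_mono (Finset.coe_subset.mpr fun y hy => ?_) (h c hcB)
    rw [Finset.mem_filter] at hy ⊢
    exact ⟨hy.1, hy.2.trans hc.2⟩
  set N := ∑ x ∈ B ∪ B', w x
  have hN {s : Finset M} (hs : s ⊆ B ∪ B') : ∀ x ∈ s, w x ≤ N := fun x hx =>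
    Finset.single_le_sum (fun _ _ => Nat.zero_le _) (hs hx)
  rw [Finset.sum_eq_sum_range_card_filter_lt B w (hN Finset.subset_union_left),
    Finset.sum_eq_sum_range_card_filter_lt B' w (hN Finset.subset_union_right)]
  refine Finset.sum_le_sum fun k _ => ?_
  have := hlow k
  have := Finset.card_filter_add_card_filter_not (s := B) (fun x => w x ≤ k)
  have := Finset.card_filter_add_card_filter_not (s := B') (fun x => w x ≤ k)
  simp only [not_le] at *
  omega

end LinearAlgebra

theorem ZMod.eq_zero_or_eq_one (a : ZMod 2) : a = 0 ∨ a = 1 := by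
  revert a
  decide

theorem exists_subset_sum_eq_of_mem_span {M : Type*} [AddCommGroup M] [Module (ZMod 2) M]
    {T : Finset M} {C : M} (h : C ∈ Submodule.span (ZMod 2) (T : Set M)) :
    ∃ S ⊆ T, C = ∑ x ∈ S, x := by
  obtain ⟨f, -, rfl⟩ := Submodule.mem_span_finset.mp h
  refine ⟨{x ∈ T | f x ≠ 0}, Finset.filter_subset _ _, ?_⟩
  rw [Finset.sum_filter]
  refine Finset.sum_congr rfl fun x _ => ?_
  rcases ZMod.eq_zero_or_eq_one (f x) with h | h <;> simp [h]

namespace SimpleGraph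

theorem IsAcyclic.exists_degree_eq_one [Fintype V] {G : SimpleGraph V} [DecidableRel G.Adj]
    (hG : G.IsAcyclic) {u v : V} (huv : G.Adj u v) : ∃ a, G.degree a = 1 := by
  -- the start of a longest path is a leaf
  have : Nonempty V := ⟨u⟩
  obtain ⟨a, b, p, hp, hmax⟩ := Walk.exists_isPath_forall_isPath_length_le_length G
  have hnil : ¬ p.Nil := by
    intro h
    have := hmax u v (.cons huv .nil) (by simp [huv.ne])
    simp [h.length_eq_zero] at this
  refine ⟨a, degree_eq_one_iff_existsUnique_adj.mpr ⟨p.snd, p.adj_snd hnil, fun w hw => ?_⟩⟩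
  refine hG.eq_snd_of_adj_start hp hw (by_contra fun hws => ?_)
  have := hmax w b (.cons hw.symm p) (hp.cons hws)
  simp at this

theorem exists_isCycle_of_forall_even_degree [Fintype V] {G : SimpleGraph V}
    [DecidableRel G.Adj] (heven : ∀ v, Even (G.degree v)) {u v : V} (huv : G.Adj u v) :
    ∃ (a : V) (c : G.Walk a a), c.IsCycle := by
  by_contra! hcyc
  obtain ⟨a, ha⟩ := IsAcyclic.exists_degree_eq_one hcyc huv
  exact Nat.not_even_one (ha ▸ heven a)

end SimpleGraph

section CycleSpace

variable [Fintype V]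

theorem boundaryMap_apply_eq_card (G : SimpleGraph V) (x : Sym2 V → ZMod 2) (v : V) :
    boundaryMap G x v = (#{e ∈ G.edgeFinset | v ∈ e ∧ x e ≠ 0} : ZMod 2) := by
  rw [Finset.natCast_card_filter]
  refine Finset.sum_congr rfl fun e _ => ?_
  by_cases hv : v ∈ e <;> rcases ZMod.eq_zero_or_eq_one (x e) with h | h <;> simp [hv, h]

theorem IsCycleVec.mem_cycleSpace {G : SimpleGraph V} {x : Sym2 V → ZMod 2}
    (hx : IsCycleVec G x) : x ∈ cycleSpace G := by
  obtain ⟨a, c, hc, rfl⟩ := hx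
  refine ⟨fun e he => if_neg fun hc => he (c.edges_subset_edgeSet hc), ?_⟩
  rw [SetLike.mem_coe, LinearMap.mem_ker]
  funext v
  have hfilter : {e ∈ G.edgeFinset | v ∈ e ∧ (if e ∈ c.edges then 1 else 0 : ZMod 2) ≠ 0}
      = {e ∈ hc.isTrail.edgesFinset | v ∈ e} := by
    ext e
    simp only [Finset.mem_filter, SimpleGraph.mem_edgeFinset, ne_eq, ite_eq_right_iff, one_ne_zero,
      imp_false, not_not, SimpleGraph.Walk.IsTrail.edgesFinset]
    exact ⟨fun h => ⟨h.2.2, h.2.1⟩, fun h => ⟨c.edges_subset_edgeSet h.1, h.2, h.1⟩⟩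
  have hcount : #{e ∈ hc.isTrail.edgesFinset | v ∈ e} = c.edges.countP (v ∈ ·) := by
    rw [← Multiset.coe_countP, Multiset.countP_eq_card_filter]
    rfl
  rw [boundaryMap_apply_eq_card, hfilter, hcount, Pi.zero_apply, ZMod.natCast_eq_zero_iff_even]
  exact (hc.isTrail.even_countP_edges_iff v).mpr fun h => absurd rfl h

theorem cycLen_add_lt {C D : Sym2 V → ZMod 2} (hD : D ≠ 0)
    (hDC : ∀ e, D e ≠ 0 → C e ≠ 0) :
    cycLen (C + D) < cycLen C := by
  have hz : ∀ a b : ZMod 2,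
      (b ≠ 0 → a ≠ 0) → (a + b ≠ 0 → a ≠ 0) ∧ (b ≠ 0 → a + b = 0) := by
    decide
  obtain ⟨e, he⟩ := Function.ne_iff.mp hD
  refine Set.ncard_lt_ncard
    ⟨fun e' he' => (hz _ _ (hDC e')).1 he', fun hsub => ?_⟩ (Set.toFinite _)
  exact hsub (hDC e he) ((hz _ _ (hDC e)).2 he)

theorem exists_isCycleVec_support_subset {G : SimpleGraph V} {C : Sym2 V → ZMod 2}
    (hC : C ∈ cycleSpace G) (hC0 : C ≠ 0) :
    ∃ D, IsCycleVec G D ∧ D ≠ 0 ∧ ∀ e, D e ≠ 0 → C e ≠ 0 := by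
  set H := G.deleteEdges {e | C e = 0}
  have hHedges : ∀ e, e ∈ H.edgeSet ↔ e ∈ G.edgeSet ∧ C e ≠ 0 := fun e => by
    simp only [H, SimpleGraph.edgeSet_deleteEdges, Set.mem_sdiff, Set.mem_ofPred_eq]
  have hdeg (v : V) : Even (H.degree v) := by
    have hv := congrFun (LinearMap.mem_ker.mp hC.2) v
    rw [boundaryMap_apply_eq_card, Pi.zero_apply, ZMod.natCast_eq_zero_iff_even] at hv
    rw [← SimpleGraph.card_incidenceFinset_eq_degree]
    convert hv using 2
    ext e
    simp only [SimpleGraph.mem_incidenceFinset, SimpleGraph.incidenceSet, Set.mem_ofPred_eq,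
      hHedges, Finset.mem_filter, SimpleGraph.mem_edgeFinset]
    tauto
  obtain ⟨e, he⟩ := Function.ne_iff.mp hC0
  have heG : e ∈ G.edgeSet := by_contra fun h => he (hC.1 e h)
  induction e using Sym2.ind with | _ u v => ?_
  obtain ⟨a, c, hc⟩ :=
    SimpleGraph.exists_isCycle_of_forall_even_degree hdeg ((hHedges s(u, v)).mpr ⟨heG, he⟩)
  refine ⟨fun e => if e ∈ c.edges then 1 else 0,
    ⟨a, c.mapLe (G.deleteEdges_le _), hc.mapLe _,
      by rw [SimpleGraph.Walk.edges_mapLe_eq_edges]⟩,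
    ?_, fun e he =>
      ((hHedges e).mp (c.edges_subset_edgeSet (by_contra fun h => he (if_neg h)))).2⟩
  obtain ⟨e, he⟩ :=
    List.exists_mem_of_ne_nil _ (SimpleGraph.Walk.edges_eq_nil.not.mpr hc.not_nil)
  exact Function.ne_iff.mpr ⟨e, by simp [he]⟩

theorem mem_span_isCycleVec_cycLen_le {G : SimpleGraph V} {C : Sym2 V → ZMod 2}
    (hC : C ∈ cycleSpace G) :
    C ∈ Submodule.span (ZMod 2) {D | IsCycleVec G D ∧ cycLen D ≤ cycLen C} := by
  by_cases hC0 : C = 0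
  · exact hC0 ▸ Submodule.zero_mem _
  obtain ⟨D, hD, hD0, hDC⟩ := exists_isCycleVec_support_subset hC hC0
  have hlt := cycLen_add_lt hD0 hDC
  have hDle : cycLen D ≤ cycLen C := Set.ncard_le_ncard hDC (Set.toFinite _)
  have hCD := mem_span_isCycleVec_cycLen_le (add_mem hC hD.mem_cycleSpace)
  have hmono : {D' | IsCycleVec G D' ∧ cycLen D' ≤ cycLen (C + D)}
      ⊆ {D' | IsCycleVec G D' ∧ cycLen D' ≤ cycLen C} :=
    fun _ h => ⟨h.1, h.2.trans hlt.le⟩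
  have key : C + D - D ∈ Submodule.span (ZMod 2) {D | IsCycleVec G D ∧ cycLen D ≤ cycLen C} :=
    sub_mem (Submodule.span_mono hmono hCD) (Submodule.subset_span ⟨hD, hDle⟩)
  rwa [add_sub_cancel_right] at key
termination_by cycLen C

end CycleSpace

/-- A cycle basis `B` of a graph `G` is a minimum cycle basis if and only if every
element `C` of the cycle space of `G` over `𝔽₂` is a sum of basis elements each of
length at most `|C|`. -/
theorem stmt_19 [Fintype V] [DecidableEq V] (G : SimpleGraph V)
    (B : Finset (Sym2 V → ZMod 2)) (hB : IsCycleBasis G B) :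
    IsMCB G B ↔
      ∀ C ∈ cycleSpace G, ∃ S ⊆ B, C = (∑ x ∈ S, x) ∧ ∀ x ∈ S, cycLen x ≤ cycLen C := by
  obtain ⟨hcyc, hli, hspan⟩ := hB
  rw [linearIndependent_subtype_iff] at hli
  constructor
  · rintro ⟨-, hmin⟩ C hC
    have hCB := mem_span_filter_le_of_isMinimal cycLen hcyc hli
      (fun B' hB'cyc hB'li hB'span =>
        hmin B' ⟨hB'cyc, linearIndependent_subtype_iff.mpr hB'li, hB'span.trans hspan⟩)
      (fun _ ha => ha) (fun _ ha => hspan ▸ ha.1.mem_cycleSpace)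
      (mem_span_isCycleVec_cycLen_le hC)
    obtain ⟨S, hS, hCS⟩ := exists_subset_sum_eq_of_mem_span hCB
    exact ⟨S, hS.trans (Finset.filter_subset _ _), hCS,
      fun x hx => (Finset.mem_filter.mp (hS hx)).2⟩
  · intro h
    refine ⟨⟨hcyc, linearIndependent_subtype_iff.mpr hli, hspan⟩, fun B' hB' => ?_⟩
    refine sum_le_sum_of_forall_mem_span_filter_le cycLen hli
      (linearIndependent_subtype_iff.mp hB'.2.1) (hB'.2.2.trans hspan.symm) fun C hC => ?_
    obtain ⟨S, hSB, hCS, hlen⟩ := h C (hspan ▸ hC)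
    rw [hCS] at hlen ⊢
    exact Submodule.sum_mem _ fun x hx =>
      Submodule.subset_span (Finset.mem_filter.mpr ⟨hSB hx, hlen x hx⟩)
end
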